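/- arXiv:2405.17058 — 2 statements merged into one kernel-verified Lean document; each statement's English description precedes it below -/
import Mathlib

section
/- Conversely, for any A2 > 0, the point with A1 = ((k2/k1)·A2^{q2-q1})^{1/(p1-p2)}, A3 = A2/β, A4 = (k5/k4)·A2, A5 = (k5/k6)·A2 is a positive steady state of the DAC ODE system, assuming p1 ≠ p2 and all rate constants positive. -/
def DACsteady (k1 k2 k4 k5 k6 am β p1 p2 q1 q2 A1 A2 A3 A4 A5 : ℝ) : Prop :=
  k1 * A1 ^ p1 * A2 ^ q1 - k2 * A1 ^ p2 * A2 ^ q2 = 0 ∧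
  k2 * A1 ^ p2 * A2 ^ q2 - k1 * A1 ^ p1 * A2 ^ q1 - am * A2 + am * β * A3
    + k4 * A4 - k5 * A2 = 0 ∧
  am * A2 - am * β * A3 = 0 ∧
  k6 * A5 - k4 * A4 = 0 ∧
  k5 * A2 - k6 * A5 = 0

/-! The binding reaction `A1 ⇌ A2` balances exactly when `A1 ^ (p1 - p2) = (k2 / k1) A2 ^ (q2 - q1)`;
the remaining equations are linear and fix `A3`, `A4`, `A5` as multiples of `A2`. -/

lemma rpow_one_div_sub_rpow_sub {c p1 p2 : ℝ} (hc : 0 ≤ c) (hp : p1 ≠ p2) :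
    (c ^ (1 / (p1 - p2))) ^ (p1 - p2) = c := by
  rw [one_div, Real.rpow_inv_rpow hc (sub_ne_zero.mpr hp)]

lemma mul_rpow_mul_rpow_eq_of_rpow_sub_eq {k1 k2 p1 p2 q1 q2 x y : ℝ} (hk1 : k1 ≠ 0)
    (hx : 0 < x) (hy : 0 < y) (h : x ^ (p1 - p2) = k2 / k1 * y ^ (q2 - q1)) :
    k1 * x ^ p1 * y ^ q1 = k2 * x ^ p2 * y ^ q2 := by
  have hxp : x ^ p1 = x ^ p2 * x ^ (p1 - p2) := by
    rw [← Real.rpow_add hx, add_sub_cancel]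
  rw [hxp, h, Real.rpow_sub hy]
  field_simp [(Real.rpow_pos_of_pos hy q1).ne']

lemma DACsteady_of_balance {k1 k2 k4 k5 k6 am β p1 p2 q1 q2 A1 A2 A3 A4 A5 : ℝ}
    (hbind : k1 * A1 ^ p1 * A2 ^ q1 = k2 * A1 ^ p2 * A2 ^ q2) (h3 : β * A3 = A2)
    (h4 : k4 * A4 = k5 * A2) (h5 : k6 * A5 = k5 * A2) :
    DACsteady k1 k2 k4 k5 k6 am β p1 p2 q1 q2 A1 A2 A3 A4 A5 := by
  refine ⟨by rw [hbind, sub_self], ?_, ?_, ?_, ?_⟩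
  · rw [hbind, mul_assoc am, h3, h4]; ring
  · rw [mul_assoc am, h3, sub_self]
  · rw [h4, h5, sub_self]
  · rw [h5, sub_self]

theorem stmt11_general (k1 k2 k4 k5 k6 am β p1 p2 q1 q2 A2 : ℝ)
    (hk1 : 0 < k1) (hk2 : 0 < k2) (hk4 : 0 < k4) (hk5 : 0 < k5) (hk6 : 0 < k6)
    (hβ : 0 < β) (hp : p1 ≠ p2) (hA2 : 0 < A2) :
    0 < (k2 / k1 * A2 ^ (q2 - q1)) ^ (1 / (p1 - p2)) ∧ 0 < A2 / β ∧
    0 < k5 / k4 * A2 ∧ 0 < k5 / k6 * A2 ∧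
    DACsteady k1 k2 k4 k5 k6 am β p1 p2 q1 q2
      ((k2 / k1 * A2 ^ (q2 - q1)) ^ (1 / (p1 - p2))) A2 (A2 / β)
      (k5 / k4 * A2) (k5 / k6 * A2) := by
  have hc : 0 < k2 / k1 * A2 ^ (q2 - q1) := by positivity
  have hA1 : 0 < (k2 / k1 * A2 ^ (q2 - q1)) ^ (1 / (p1 - p2)) := Real.rpow_pos_of_pos hc _
  refine ⟨hA1, by positivity, by positivity, by positivity, DACsteady_of_balance ?_ ?_ ?_ ?_⟩
  · exact mul_rpow_mul_rpow_eq_of_rpow_sub_eq hk1.ne' hA1 hA2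
      (rpow_one_div_sub_rpow_sub hc.le hp)
  · field_simp
  · field_simp
  · field_simp

theorem stmt11 (k1 k2 k4 k5 k6 am β p1 p2 q1 q2 A2 : ℝ)
    (hk1 : 0 < k1) (hk2 : 0 < k2) (hk4 : 0 < k4) (hk5 : 0 < k5) (hk6 : 0 < k6)
    (ham : 0 < am) (hβ : 0 < β) (hp : p1 ≠ p2) (hA2 : 0 < A2) :
    0 < (k2 / k1 * A2 ^ (q2 - q1)) ^ (1 / (p1 - p2)) ∧ 0 < A2 / β ∧
    0 < k5 / k4 * A2 ∧ 0 < k5 / k6 * A2 ∧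
    DACsteady k1 k2 k4 k5 k6 am β p1 p2 q1 q2
      ((k2 / k1 * A2 ^ (q2 - q1)) ^ (1 / (p1 - p2))) A2 (A2 / β)
      (k5 / k4 * A2) (k5 / k6 * A2) :=
  stmt11_general k1 k2 k4 k5 k6 am β p1 p2 q1 q2 A2 hk1 hk2 hk4 hk5 hk6 hβ hp hA2
end

section
/- If p1 = p2 and q1 ≠ q2 (P-null DAC system), then at any positive steady state, A3 = A2/β, A4 = (k5/k4)·A2, and A5 = (k5/k6)·A2 with A2 = (k1/k2)^{1/(q2-q1)}; hence A2, A3, A4, A5 all take the same value at every positive steady state, regardless of stoichiometric class. -/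
theorem stmt13 (k1 k2 k4 k5 k6 am β p1 p2 q1 q2 A1 A2 A3 A4 A5 : ℝ)
    (hk1 : 0 < k1) (hk2 : 0 < k2) (hk4 : 0 < k4) (hk5 : 0 < k5) (hk6 : 0 < k6)
    (ham : 0 < am) (hβ : 0 < β) (hp : p1 = p2) (hq : q1 ≠ q2)
    (hA1 : 0 < A1) (hA2 : 0 < A2) (hA3 : 0 < A3) (hA4 : 0 < A4) (hA5 : 0 < A5)
    (hss : DACsteady k1 k2 k4 k5 k6 am β p1 p2 q1 q2 A1 A2 A3 A4 A5) :
    A3 = A2 / β ∧ A4 = k5 / k4 * A2 ∧ A5 = k5 / k6 * A2 ∧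
    A2 = (k1 / k2) ^ (1 / (q2 - q1)) := by
  obtain ⟨h1, h2, h3, h4, h5⟩ := hss
  have h3' : β * A3 = A2 := by
    have h := (mul_eq_zero.1 (show am * (A2 - β * A3) = 0 by linarith)).resolve_left
      (ne_of_gt ham)
    linarith
  refine ⟨?_, ?_, ?_, ?_⟩
  · rw [eq_div_iff (ne_of_gt hβ)]
    linarith
  · have h5' : k6 * A5 = k5 * A2 := by linarith
    have h4' : k4 * A4 = k5 * A2 := by linarith
    field_simp
    linarith
  · field_simp
    linarith
  · subst hp
    have hA1p : (0:ℝ) < A1 ^ p1 := Real.rpow_pos_of_pos hA1 _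
    have key : k1 * A2 ^ q1 = k2 * A2 ^ q2 := by
      have := h1
      have h' : A1 ^ p1 * (k1 * A2 ^ q1 - k2 * A2 ^ q2) = 0 := by ring_nf; nlinarith [h1]
      rcases mul_eq_zero.1 h' with h | h
      · exact absurd h (ne_of_gt hA1p)
      · linarith
    have hpow : A2 ^ (q2 - q1) = k1 / k2 := by
      rw [Real.rpow_sub hA2,
        div_eq_div_iff (ne_of_gt (Real.rpow_pos_of_pos hA2 q1)) (ne_of_gt hk2)]
      linarith [key]
    have hq' : q2 - q1 ≠ 0 := sub_ne_zero.2 (Ne.symm hq)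
    rw [← hpow, ← Real.rpow_mul hA2.le, mul_one_div, div_self hq', Real.rpow_one]
end
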